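/- Fix integers d ≥ 1, s ≥ 2, and M ≥ 1. For θ ∈ {1,…,M}^d let x_θ ∈ ℝ^d have i-th coordinate (θ_i − 1/2)/M. Let g : ℝ^d → ℝ be of class C² with g(x) = 0 whenever ‖x‖₂ ≥ 1/3, and set c := ∂²g/∂x₁²(0). For a sign assignment β : {1,…,M}^d → {−1,1}, define h_β(x) := ∑_{θ ∈ {1,…,M}^d} M^{−s} β(θ) g(M(x − x_θ)). Then for every θ ∈ {1,…,M}^d, ∂²h_β/∂x₁²(x_θ) = M^{2−s} β(θ) c. Consequently, if c > 0, then for every β and θ one has ∂²h_β/∂x₁²(x_θ) > 0 if and only if β(θ) = 1, so the family of sets {x ∈ ℝ^d : ∂²h_β/∂x₁²(x) > 0}, indexed by all 2^{M^d} sign assignments β, shatters the set of the M^d centers {x_θ : θ ∈ {1,…,M}^d}. -/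

import Mathlib

/-- Partial derivative in the `i`-th coordinate direction. -/
noncomputable def pderiv' (d : ℕ) (i : Fin d) (f : (Fin d → ℝ) → ℝ) :
    (Fin d → ℝ) → ℝ :=
  fun x => fderiv ℝ f x (Pi.single i 1)

/-- The center `x_θ` of the subcube `Q_θ`, with `(x_θ)ᵢ = (θᵢ - 1/2)/M`. -/
noncomputable def center (d M : ℕ) (θ : Fin d → ℕ) : Fin d → ℝ :=
  fun i => ((θ i : ℝ) - 1 / 2) / M

/-- The function `h_β(x) = ∑_{θ ∈ {1,…,M}^d} M^{-s} β(θ) g(M (x - x_θ))`. -/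
noncomputable def bumpSum (d s M : ℕ) (g : (Fin d → ℝ) → ℝ) (β : (Fin d → ℕ) → ℝ) :
    (Fin d → ℝ) → ℝ :=
  fun x => ∑ θ ∈ Fintype.piFinset (fun _ : Fin d => Finset.Icc 1 M),
    (M : ℝ) ^ (-(s : ℤ)) * β θ * g (fun i => (M : ℝ) * (x i - center d M θ i))

/-- A family `F` of subsets of `X` shatters a set `S ⊆ X` if every subset of `S`
is of the form `A ∩ S` for some `A ∈ F`. -/
def ShattersFam {X : Type*} (F : Set (Set X)) (S : Set X) : Prop :=
  ∀ T ⊆ S, ∃ A ∈ F, A ∩ S = T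

/-!
Distinct grid centers are at sup-distance at least `1/M`, while `g (M (x - x_θ))` vanishes outside
the sup-ball of radius `1/(3M)` around `x_θ`. Hence near `x_θ` the sum `h_β` reduces to the single
term `M^{-s} β(θ) g(M (x - x_θ))`, whose second derivative at `x_θ` is `M^{2-s} β(θ) c` by the chain
rule. When `c > 0` its sign is that of `β(θ)`, so for a set `T` of centers the assignment
`β(θ) = 1` on `T` and `-1` elsewhere cuts out exactly `T`.
-/

open Filter Topology

section pderiv'

variable {d : ℕ} (i : Fin d)

theorem ContDiff.pderiv' {n : WithTop ℕ∞} {f : (Fin d → ℝ) → ℝ} (hf : ContDiff ℝ (n + 1) f) :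
    ContDiff ℝ n (pderiv' d i f) :=
  (hf.fderiv_right le_rfl).clm_apply contDiff_const

theorem Filter.EventuallyEq.pderiv' {f₁ f₂ : (Fin d → ℝ) → ℝ} {x : Fin d → ℝ}
    (h : f₁ =ᶠ[𝓝 x] f₂) : pderiv' d i f₁ =ᶠ[𝓝 x] pderiv' d i f₂ :=
  h.fderiv.mono fun _ hy => by rw [_root_.pderiv', _root_.pderiv', hy]

theorem pderiv'_const_mul_comp_smul_sub (k M : ℝ) (a : Fin d → ℝ) {f : (Fin d → ℝ) → ℝ}
    (hf : Differentiable ℝ f) :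
    pderiv' d i (fun y => k * f (M • (y - a))) = fun y => k * M * pderiv' d i f (M • (y - a)) := by
  funext y
  have hinner :
      HasFDerivAt (fun y : Fin d → ℝ => M • (y - a)) (M • ContinuousLinearMap.id ℝ _) y :=
    ((hasFDerivAt_id y).sub_const a).const_smul M
  have hcomp : HasFDerivAt (fun y => k * f (M • (y - a)))
      (k • (fderiv ℝ f (M • (y - a))).comp (M • ContinuousLinearMap.id ℝ _)) y :=
    ((hf _).hasFDerivAt.comp y hinner).const_mul k
  simp [pderiv', hcomp.fderiv, mul_assoc]

theorem pderiv'_pderiv'_const_mul_comp_smul_sub (k M : ℝ) (a : Fin d → ℝ)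
    {f : (Fin d → ℝ) → ℝ} (hf : ContDiff ℝ 2 f) :
    pderiv' d i (pderiv' d i (fun y => k * f (M • (y - a)))) =
      fun y => k * M ^ 2 * pderiv' d i (pderiv' d i f) (M • (y - a)) := by
  rw [pderiv'_const_mul_comp_smul_sub i k M a (hf.differentiable two_ne_zero),
    pderiv'_const_mul_comp_smul_sub i _ M a ((hf.pderiv' i).differentiable one_ne_zero)]
  funext y
  ring

end pderiv'

theorem norm_le_sqrt_sum_sq {d : ℕ} (y : Fin d → ℝ) : ‖y‖ ≤ Real.sqrt (∑ j, y j ^ 2) := by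
  refine (pi_norm_le_iff_of_nonneg (Real.sqrt_nonneg _)).2 fun j => ?_
  rw [Real.norm_eq_abs, ← Real.sqrt_sq_eq_abs]
  exact Real.sqrt_le_sqrt (Finset.single_le_sum (fun j _ => sq_nonneg (y j)) (Finset.mem_univ j))

theorem one_div_le_dist_center {d M : ℕ} (hM : 0 < M) {θ θ' : Fin d → ℕ} (h : θ ≠ θ') :
    1 / (M : ℝ) ≤ dist (center d M θ) (center d M θ') := by
  obtain ⟨j, hj⟩ := Function.ne_iff.1 h
  have hM' : (0 : ℝ) < M := by exact_mod_cast hM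
  have hθj : (1 : ℝ) ≤ |(θ j : ℝ) - θ' j| := by
    have := Int.one_le_abs (sub_ne_zero.2 (Int.ofNat_inj.not.2 hj))
    exact_mod_cast this
  calc 1 / (M : ℝ) ≤ |(θ j : ℝ) - θ' j| / M := by gcongr
    _ = dist (center d M θ j) (center d M θ' j) := by
      rw [Real.dist_eq, center, center, ← sub_div, abs_div, abs_of_pos hM']; ring_nf
    _ ≤ dist (center d M θ) (center d M θ') := dist_le_pi_dist _ _ j

theorem pos_of_mem_piFinset_Icc {d M : ℕ} (i : Fin d) {θ : Fin d → ℕ}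
    (hθ : θ ∈ Fintype.piFinset fun _ : Fin d => Finset.Icc 1 M) : 0 < M :=
  have hθi := Finset.mem_Icc.1 (Fintype.mem_piFinset.1 hθ i)
  hθi.1.trans hθi.2

theorem bumpSum_eventuallyEq_nhds_center {d s M : ℕ} (hM : 0 < M) {g : (Fin d → ℝ) → ℝ}
    (hg : ∀ y, 1 / 3 ≤ ‖y‖ → g y = 0) (β : (Fin d → ℕ) → ℝ) {θ : Fin d → ℕ}
    (hθ : θ ∈ Fintype.piFinset fun _ : Fin d => Finset.Icc 1 M) :
    bumpSum d s M g β =ᶠ[𝓝 (center d M θ)]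
      fun x => (M : ℝ) ^ (-(s : ℤ)) * β θ * g ((M : ℝ) • (x - center d M θ)) := by
  have hM' : (0 : ℝ) < M := by exact_mod_cast hM
  filter_upwards [Metric.ball_mem_nhds (center d M θ) (by positivity : (0 : ℝ) < 1 / (3 * M))]
    with x hx
  refine Finset.sum_eq_single_of_mem θ hθ fun θ' _ hne => ?_
  change _ * g ((M : ℝ) • (x - center d M θ')) = 0
  rw [hg _ ?_, mul_zero]
  have hfar : 2 / (3 * M) ≤ dist x (center d M θ') := by
    have hsep := one_div_le_dist_center hM hne.symm
    have htri := dist_triangle (center d M θ) x (center d M θ')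
    have hMr : 1 / (M : ℝ) - 1 / (3 * M) = 2 / (3 * M) := by field_simp; ring
    rw [Metric.mem_ball, dist_comm] at hx
    linarith
  calc (1 : ℝ) / 3 ≤ M * (2 / (3 * M)) := by field_simp; norm_num
    _ ≤ M * dist x (center d M θ') := by gcongr
    _ = ‖(M : ℝ) • (x - center d M θ')‖ := by
      rw [norm_smul, Real.norm_of_nonneg hM'.le, dist_eq_norm]

theorem pderiv'_pderiv'_bumpSum_center {d s M : ℕ} (i : Fin d) {g : (Fin d → ℝ) → ℝ}
    (hg2 : ContDiff ℝ 2 g) (hg : ∀ y, 1 / 3 ≤ ‖y‖ → g y = 0) (β : (Fin d → ℕ) → ℝ)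
    {θ : Fin d → ℕ} (hθ : θ ∈ Fintype.piFinset fun _ : Fin d => Finset.Icc 1 M) :
    pderiv' d i (pderiv' d i (bumpSum d s M g β)) (center d M θ) =
      (M : ℝ) ^ ((2 : ℤ) - s) * β θ * pderiv' d i (pderiv' d i g) 0 := by
  have hM := pos_of_mem_piFinset_Icc i hθ
  rw [(((bumpSum_eventuallyEq_nhds_center (s := s) hM hg β hθ).pderiv' i).pderiv' i).eq_of_nhds,
    pderiv'_pderiv'_const_mul_comp_smul_sub i _ _ _ hg2]
  simp only [sub_self, smul_zero]
  rw [sub_eq_neg_add, zpow_add₀ (by positivity)]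
  norm_cast
  ring

theorem mul_mul_pos_iff_eq_one {a b c : ℝ} (ha : 0 < a) (hc : 0 < c) (hb : b = 1 ∨ b = -1) :
    0 < a * b * c ↔ b = 1 := by
  rcases hb with rfl | rfl
  · simpa using mul_pos ha hc
  · norm_num
    positivity

theorem shattersFam_image_of_sign_iff {X ι : Type*} (e : ι → X) (S : Set ι)
    (P : (ι → ℝ) → X → Prop)
    (hP : ∀ β : ι → ℝ, (∀ θ, β θ = 1 ∨ β θ = -1) → ∀ θ ∈ S, (P β (e θ) ↔ β θ = 1)) :
    ShattersFam {A | ∃ β : ι → ℝ, (∀ θ, β θ = 1 ∨ β θ = -1) ∧ A = {x | P β x}} (e '' S) := by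
  classical
  intro T hT
  let β : ι → ℝ := fun θ => if e θ ∈ T then 1 else -1
  have hβ : ∀ θ, β θ = 1 ∨ β θ = -1 := fun θ => by by_cases h : e θ ∈ T <;> simp [β, h]
  refine ⟨_, ⟨β, hβ, rfl⟩, Set.ext fun x => ⟨?_, fun hx => ?_⟩⟩
  · rintro ⟨hx, θ, hθ, rfl⟩
    by_contra h
    have hβθ := (hP β hβ θ hθ).1 hx
    norm_num [β, h] at hβθ
  · obtain ⟨θ, hθ, rfl⟩ := hT hx
    exact ⟨(hP β hβ θ hθ).2 (if_pos hx), θ, hθ, rfl⟩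

theorem bumpSum_second_deriv_shatters_general (d s M : ℕ) (hd : 0 < d)
    (g : (Fin d → ℝ) → ℝ) (hg2 : ContDiff ℝ 2 g)
    (hg0 : ∀ x : Fin d → ℝ, (1 : ℝ) / 3 ≤ Real.sqrt (∑ i, x i ^ 2) → g x = 0)
    (c : ℝ) (hc : c = pderiv' d ⟨0, hd⟩ (pderiv' d ⟨0, hd⟩ g) 0) :
    (∀ β : (Fin d → ℕ) → ℝ, (∀ θ, β θ = 1 ∨ β θ = -1) →
      ∀ θ ∈ Fintype.piFinset (fun _ : Fin d => Finset.Icc 1 M),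
        pderiv' d ⟨0, hd⟩ (pderiv' d ⟨0, hd⟩ (bumpSum d s M g β)) (center d M θ)
          = (M : ℝ) ^ ((2 : ℤ) - s) * β θ * c) ∧
    (0 < c →
      (∀ β : (Fin d → ℕ) → ℝ, (∀ θ, β θ = 1 ∨ β θ = -1) →
        ∀ θ ∈ Fintype.piFinset (fun _ : Fin d => Finset.Icc 1 M),
          (0 < pderiv' d ⟨0, hd⟩ (pderiv' d ⟨0, hd⟩ (bumpSum d s M g β))
              (center d M θ) ↔ β θ = 1)) ∧
      ShattersFam
        {A : Set (Fin d → ℝ) | ∃ β : (Fin d → ℕ) → ℝ, (∀ θ, β θ = 1 ∨ β θ = -1) ∧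
          A = {x | 0 < pderiv' d ⟨0, hd⟩ (pderiv' d ⟨0, hd⟩ (bumpSum d s M g β)) x}}
        (center d M '' {θ | ∀ i, 1 ≤ θ i ∧ θ i ≤ M})) := by
  have hg : ∀ y, 1 / 3 ≤ ‖y‖ → g y = 0 := fun y hy => hg0 y (hy.trans (norm_le_sqrt_sum_sq y))
  have hvalue : ∀ β, ∀ θ ∈ Fintype.piFinset (fun _ : Fin d => Finset.Icc 1 M),
      pderiv' d ⟨0, hd⟩ (pderiv' d ⟨0, hd⟩ (bumpSum d s M g β)) (center d M θ)
        = (M : ℝ) ^ ((2 : ℤ) - s) * β θ * c := fun β θ hθ => by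
    rw [hc, pderiv'_pderiv'_bumpSum_center _ hg2 hg β hθ]
  have hsign (hc0 : 0 < c) (β : (Fin d → ℕ) → ℝ) (hβ : ∀ θ, β θ = 1 ∨ β θ = -1) :
      ∀ θ ∈ Fintype.piFinset (fun _ : Fin d => Finset.Icc 1 M),
        (0 < pderiv' d ⟨0, hd⟩ (pderiv' d ⟨0, hd⟩ (bumpSum d s M g β)) (center d M θ)
          ↔ β θ = 1) := fun θ hθ => by
    have hM : (0 : ℝ) < M := by exact_mod_cast pos_of_mem_piFinset_Icc ⟨0, hd⟩ hθ
    rw [hvalue β θ hθ]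
    exact mul_mul_pos_iff_eq_one (zpow_pos hM _) hc0 (hβ θ)
  refine ⟨fun β _ => hvalue β, fun hc0 => ⟨hsign hc0, ?_⟩⟩
  exact shattersFam_image_of_sign_iff _ _ _ fun β hβ θ hθ => hsign hc0 β hβ θ <| by
    simpa only [Fintype.mem_piFinset, Finset.mem_Icc, Set.mem_ofPred_eq] using hθ

/-- Values of `∂² h_β / ∂x₁²` at the grid centers: with `c = ∂²g/∂x₁²(0)`, one has
`∂²h_β/∂x₁²(x_θ) = M^{2-s} β(θ) c` for every `θ ∈ {1,…,M}^d`; consequently, if `c > 0`,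
the sign of `∂²h_β/∂x₁²` at `x_θ` matches `β(θ)`, so the positivity sets of the second
derivatives `∂²h_β/∂x₁²` (over all sign assignments `β`) shatter the `M^d` centers. -/
theorem bumpSum_second_deriv_shatters (d s M : ℕ) (hd : 0 < d) (hs : 2 ≤ s)
    (hM : 1 ≤ M) (g : (Fin d → ℝ) → ℝ) (hg2 : ContDiff ℝ 2 g)
    (hg0 : ∀ x : Fin d → ℝ, (1 : ℝ) / 3 ≤ Real.sqrt (∑ i, x i ^ 2) → g x = 0)
    (c : ℝ) (hc : c = pderiv' d ⟨0, hd⟩ (pderiv' d ⟨0, hd⟩ g) 0) :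
    (∀ β : (Fin d → ℕ) → ℝ, (∀ θ, β θ = 1 ∨ β θ = -1) →
      ∀ θ ∈ Fintype.piFinset (fun _ : Fin d => Finset.Icc 1 M),
        pderiv' d ⟨0, hd⟩ (pderiv' d ⟨0, hd⟩ (bumpSum d s M g β)) (center d M θ)
          = (M : ℝ) ^ ((2 : ℤ) - s) * β θ * c) ∧
    (0 < c →
      (∀ β : (Fin d → ℕ) → ℝ, (∀ θ, β θ = 1 ∨ β θ = -1) →
        ∀ θ ∈ Fintype.piFinset (fun _ : Fin d => Finset.Icc 1 M),
          (0 < pderiv' d ⟨0, hd⟩ (pderiv' d ⟨0, hd⟩ (bumpSum d s M g β))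
              (center d M θ) ↔ β θ = 1)) ∧
      ShattersFam
        {A : Set (Fin d → ℝ) | ∃ β : (Fin d → ℕ) → ℝ, (∀ θ, β θ = 1 ∨ β θ = -1) ∧
          A = {x | 0 < pderiv' d ⟨0, hd⟩ (pderiv' d ⟨0, hd⟩ (bumpSum d s M g β)) x}}
        (center d M '' {θ | ∀ i, 1 ≤ θ i ∧ θ i ≤ M})) :=
  bumpSum_second_deriv_shatters_general d s M hd g hg2 hg0 c hc
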